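/- arXiv:0904.2048 — 3 statements merged into one kernel-verified Lean document; each statement's English description precedes it below -/
import Mathlib

section
/- For any d₁, d₂ ≥ 1 and any vectors x : Fin d₁ → ℝ and y : Fin d₂ → ℝ, the second elementary symmetric polynomial of the tensor product factorises as e_2(x ⊗ y) = e_1(x)² · e_2(y) + e_2(x) · e_1(y)² − 2 · e_2(x) · e_2(y). -/
open Finset

/-- The `k`-th elementary symmetric polynomial of the entries of `x`. -/
noncomputable def esym {ι : Type*} [Fintype ι] (k : ℕ) (x : ι → ℝ) : ℝ :=
  ∑ S ∈ Finset.univ.powersetCard k, ∏ i ∈ S, x i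

/-- Tensor (Kronecker) product of two vectors. -/
def tensor {d₁ d₂ : ℕ} (x : Fin d₁ → ℝ) (y : Fin d₂ → ℝ) : Fin d₁ × Fin d₂ → ℝ :=
  fun p => x p.1 * y p.2

/-!
Newton's identity `2 e₂ = p₁² - p₂` expresses `e₂` through the power sums `pₙ = ∑ xᵢⁿ`, and
power sums are multiplicative under the tensor product: `pₙ(x ⊗ y) = pₙ(x) pₙ(y)`. Eliminating
`p₂(x)` and `p₂(y)` from `2 e₂(x ⊗ y) = p₁(x)² p₁(y)² - p₂(x) p₂(y)` gives the formula.
-/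

section Esym

variable {ι : Type*} [Fintype ι]

theorem esym_eq_aeval_esymm [DecidableEq ι] (k : ℕ) (x : ι → ℝ) :
    esym k x = MvPolynomial.aeval x (MvPolynomial.esymm ι ℝ k) := by
  simp only [esym, MvPolynomial.esymm, map_sum, map_prod, MvPolynomial.aeval_X]

theorem esym_one (x : ι → ℝ) : esym 1 x = ∑ i, x i := by
  classical
  simp [esym_eq_aeval_esymm, MvPolynomial.esymm_one]

theorem two_mul_esym_two (x : ι → ℝ) : 2 * esym 2 x = (∑ i, x i) ^ 2 - ∑ i, x i ^ 2 := by
  classical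
  have newton : 2 * esym 2 x = (-1) ^ 3 * (∑ i, x i ^ 2 - esym 1 x * ∑ i, x i) := by
    simpa [sub_eq_add_neg, esym_eq_aeval_esymm, Nat.sum_antidiagonal_eq_sum_range_succ_mk,
      Finset.sum_range_succ, MvPolynomial.psum] using
      congrArg (MvPolynomial.aeval x) (MvPolynomial.mul_esymm_eq_sum ι ℝ 2)
  rw [newton, esym_one]
  ring

end Esym

theorem sum_tensor_pow {d₁ d₂ : ℕ} (x : Fin d₁ → ℝ) (y : Fin d₂ → ℝ) (n : ℕ) :
    ∑ p, tensor x y p ^ n = (∑ i, x i ^ n) * ∑ j, y j ^ n := by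
  simp only [tensor, mul_pow, Fintype.sum_prod_type, Finset.sum_mul_sum]

theorem esym_two_tensor_general (d₁ d₂ : ℕ)
    (x : Fin d₁ → ℝ) (y : Fin d₂ → ℝ) :
    esym 2 (tensor x y) =
      (esym 1 x) ^ 2 * esym 2 y + esym 2 x * (esym 1 y) ^ 2 - 2 * esym 2 x * esym 2 y := by
  have hx := two_mul_esym_two x
  have hy := two_mul_esym_two y
  have hxy := two_mul_esym_two (tensor x y)
  rw [sum_tensor_pow, show ∑ p, tensor x y p = (∑ i, x i) * ∑ j, y j by
    simpa using sum_tensor_pow x y 1] at hxy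
  rw [esym_one, esym_one]
  linear_combination (1 / 2 : ℝ) * hxy - ((∑ j, y j ^ 2) / 2) * hx
    - (((∑ i, x i) ^ 2 - 2 * esym 2 x) / 2) * hy

theorem esym_two_tensor (d₁ d₂ : ℕ) (h₁ : 1 ≤ d₁) (h₂ : 1 ≤ d₂)
    (x : Fin d₁ → ℝ) (y : Fin d₂ → ℝ) :
    esym 2 (tensor x y) =
      (esym 1 x) ^ 2 * esym 2 y + esym 2 x * (esym 1 y) ^ 2 - 2 * esym 2 x * esym 2 y :=
  esym_two_tensor_general d₁ d₂ x y
end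

section
/- For any d₁, d₂ ≥ 1 and any vectors x : Fin d₁ → ℝ and y : Fin d₂ → ℝ, the second-to-top elementary symmetric polynomial of the tensor product factorises as e_{d₁·d₂ − 1}(x ⊗ y) = e_{d₁ − 1}(x) · e_{d₂ − 1}(y) · e_{d₁}(x)^{d₂ − 1} · e_{d₂}(y)^{d₁ − 1}. -/
open Finset

/-!
A set of `d₁ d₂ - 1` entries of `x ⊗ y` omits exactly one entry `(i, j)`. Its product splits
into the full rows `a ≠ i` and the row `i` without column `j`, which gives
`(∏_{a ≠ i} x a) (∏_{b ≠ j} y b) (∏ x)^(d₂ - 1) (∏ y)^(d₁ - 1)`; summing over `(i, j)` factorises.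
-/

section esym

variable {ι : Type*} [Fintype ι]

lemma esym_card (x : ι → ℝ) : esym (Fintype.card ι) x = ∏ i, x i := by
  rw [esym, ← card_univ, powersetCard_self, sum_singleton]

lemma esym_card_sub_one [DecidableEq ι] [Nonempty ι] (x : ι → ℝ) :
    esym (Fintype.card ι - 1) x = ∑ i, ∏ j ∈ ({i}ᶜ : Finset ι), x j := by
  symm
  refine sum_bij (fun i _ => {i}ᶜ) (fun i _ => ?_) (fun i _ j _ h => by simpa using h)
    (fun S hS => ?_) (fun _ _ => rfl)
  · simp [card_compl]
  · rw [mem_powersetCard_univ] at hS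
    have hpos : 0 < Fintype.card ι := Fintype.card_pos
    obtain ⟨i, hi⟩ : ∃ i, Sᶜ = {i} := card_eq_one.mp (by rw [card_compl, hS]; omega)
    exact ⟨i, mem_univ i, by rw [← hi, compl_compl]⟩

end esym

lemma compl_singleton_pair_eq_union {α β : Type*} [Fintype α] [Fintype β] [DecidableEq α]
    [DecidableEq β] (i : α) (j : β) :
    ({(i, j)}ᶜ : Finset (α × β)) = ({i}ᶜ ×ˢ univ) ∪ ({i} ×ˢ {j}ᶜ) := by
  ext ⟨a, b⟩
  by_cases h : a = i <;> simp [h]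

lemma prod_compl_singleton_pair {α β M : Type*} [Fintype α] [Fintype β] [DecidableEq α]
    [DecidableEq β] [CommMonoid M] (f : α × β → M) (i : α) (j : β) :
    ∏ q ∈ ({(i, j)}ᶜ : Finset (α × β)), f q =
      (∏ a ∈ ({i}ᶜ : Finset α), ∏ b, f (a, b)) * ∏ b ∈ ({j}ᶜ : Finset β), f (i, b) := by
  have hdisj : Disjoint ({i}ᶜ ×ˢ (univ : Finset β)) ({i} ×ˢ ({j}ᶜ : Finset β)) :=
    disjoint_product.mpr (Or.inl disjoint_compl_left)
  rw [compl_singleton_pair_eq_union, prod_union hdisj, prod_product, prod_product, prod_singleton]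

lemma prod_compl_singleton_tensor {d₁ d₂ : ℕ} (x : Fin d₁ → ℝ) (y : Fin d₂ → ℝ)
    (i : Fin d₁) (j : Fin d₂) :
    ∏ q ∈ ({(i, j)}ᶜ : Finset (Fin d₁ × Fin d₂)), tensor x y q =
      (∏ a ∈ ({i}ᶜ : Finset (Fin d₁)), x a) * (∏ b ∈ ({j}ᶜ : Finset (Fin d₂)), y b) *
        (∏ a, x a) ^ (d₂ - 1) * (∏ b, y b) ^ (d₁ - 1) := by
  obtain ⟨m, rfl⟩ : ∃ m, d₂ = m + 1 := ⟨d₂ - 1, by have := j.pos; omega⟩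
  rw [prod_compl_singleton_pair, Fintype.prod_eq_mul_prod_compl i x]
  simp only [tensor, prod_mul_distrib, prod_const, prod_pow, card_univ, Fintype.card_fin,
    card_compl, card_singleton, Nat.add_sub_cancel]
  ring

theorem esym_secondTop_tensor (d₁ d₂ : ℕ) (h₁ : 1 ≤ d₁) (h₂ : 1 ≤ d₂)
    (x : Fin d₁ → ℝ) (y : Fin d₂ → ℝ) :
    esym (d₁ * d₂ - 1) (tensor x y) =
      esym (d₁ - 1) x * esym (d₂ - 1) y * (esym d₁ x) ^ (d₂ - 1) * (esym d₂ y) ^ (d₁ - 1) := by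
  have : Nonempty (Fin d₁) := ⟨⟨0, h₁⟩⟩
  have : Nonempty (Fin d₂) := ⟨⟨0, h₂⟩⟩
  have hxy := esym_card_sub_one (tensor x y)
  have hx := esym_card_sub_one x
  have hy := esym_card_sub_one y
  have hx' := esym_card x
  have hy' := esym_card y
  simp only [Fintype.card_prod, Fintype.card_fin] at hxy hx hy hx' hy'
  rw [hxy, hx, hy, hx', hy', Fintype.sum_prod_type, sum_mul_sum, sum_mul, sum_mul]
  refine sum_congr rfl fun i _ => ?_
  rw [sum_mul, sum_mul]
  exact sum_congr rfl fun j _ => prod_compl_singleton_tensor x y i j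
end

section
/- Let b ≥ 1 and let c : Fin b → ℝ have nonnegative entries summing to 1. Then e_2(c) − 2·e_3(c) ≥ 0 and 1 − 2·e_2(c) + 3·e_3(c) > 0; consequently the ratio r(c) = (e_2(c) − 2·e_3(c)) / (1 − 2·e_2(c) + 3·e_3(c)) is nonnegative. -/
/-!
Newton's identities give `∑ cᵢ² = (∑ cᵢ)² - 2e₂` and `∑ cᵢ³ = (∑ cᵢ)(∑ cᵢ²) - e₂ (∑ cᵢ) + 3e₃`.
When `∑ cᵢ = 1` the denominator is therefore `∑ cᵢ² + 3e₃ > 0`, while the numerator satisfies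
`e₂ - 2e₃ ≥ e₂ - 3e₃ = ∑ cᵢ² (1 - cᵢ) ≥ 0`, because every entry lies in `[0, 1]`.
-/

open Finset

section Newton

open MvPolynomial

variable {ι : Type*} [Fintype ι] (x : ι → ℝ)

lemma eval_esymm_eq_esym (k : ℕ) : eval x (esymm ι ℝ k) = esym k x := by
  simp [esymm, esym, map_sum]

lemma eval_psum (k : ℕ) : eval x (psum ι ℝ k) = ∑ i, x i ^ k := by
  simp [psum, map_sum]

lemma sum_sq_eq_newton : ∑ i, x i ^ 2 = (∑ i, x i) ^ 2 - 2 * esym 2 x := by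
  classical
  have h := congrArg (eval x) (mul_esymm_eq_sum ι ℝ 2)
  rw [show ({a ∈ antidiagonal 2 | a.1 < 2} : Finset (ℕ × ℕ)) = {(0, 2), (1, 1)} by decide,
    sum_pair (by decide), esymm_zero, esymm_one] at h
  simp only [map_mul, map_add, map_neg, map_pow, map_one, map_sum, eval_X, eval_ofNat,
    eval_esymm_eq_esym, eval_psum, pow_one, Nat.cast_ofNat] at h
  linear_combination h

lemma sum_cube_eq_newton :
    ∑ i, x i ^ 3 = (∑ i, x i) * ∑ i, x i ^ 2 - esym 2 x * ∑ i, x i + 3 * esym 3 x := by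
  classical
  have h := congrArg (eval x) (mul_esymm_eq_sum ι ℝ 3)
  rw [show ({a ∈ antidiagonal 3 | a.1 < 3} : Finset (ℕ × ℕ)) = {(0, 3), (1, 2), (2, 1)} by
    decide, sum_insert (by decide), sum_pair (by decide), esymm_zero, esymm_one] at h
  simp only [map_mul, map_add, map_neg, map_pow, map_one, map_sum, eval_X, eval_ofNat,
    eval_esymm_eq_esym, eval_psum, pow_one, Nat.cast_ofNat] at h
  linear_combination -h

end Newton

section Bounds

variable {ι : Type*} [Fintype ι] {x : ι → ℝ}

lemma esym_nonneg (hx : ∀ i, 0 ≤ x i) (k : ℕ) : 0 ≤ esym k x :=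
  sum_nonneg fun _ _ => prod_nonneg fun i _ => hx i

lemma sum_cube_le_sum_sq (hx : ∀ i, x i ≤ 1) : ∑ i, x i ^ 3 ≤ ∑ i, x i ^ 2 :=
  sum_le_sum fun i _ => by
    rw [pow_succ]
    exact mul_le_of_le_one_right (sq_nonneg _) (hx i)

lemma sum_sq_pos_of_sum_ne_zero (hx : ∑ i, x i ≠ 0) : 0 < ∑ i, x i ^ 2 := by
  obtain ⟨i, -, hi⟩ := exists_ne_zero_of_sum_ne_zero hx
  exact sum_pos' (fun j _ => sq_nonneg (x j)) ⟨i, mem_univ i, sq_pos_of_ne_zero hi⟩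

end Bounds

theorem r_nonneg_general (b : ℕ) (c : Fin b → ℝ)
    (hc : ∀ j, 0 ≤ c j) (hcs : ∑ j, c j = 1) :
    esym 2 c - 2 * esym 3 c ≥ 0 ∧ 1 - 2 * esym 2 c + 3 * esym 3 c > 0 ∧
      (esym 2 c - 2 * esym 3 c) / (1 - 2 * esym 2 c + 3 * esym 3 c) ≥ 0 := by
  have hc_le_one : ∀ j, c j ≤ 1 := fun j =>
    hcs ▸ single_le_sum (fun i _ => hc i) (mem_univ j)
  have hp2 := sum_sq_eq_newton c
  have hp3 := sum_cube_eq_newton c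
  rw [hcs] at hp2 hp3
  have hp3_le := sum_cube_le_sum_sq hc_le_one
  have hp2_pos := sum_sq_pos_of_sum_ne_zero (hcs ▸ one_ne_zero)
  have he3 := esym_nonneg hc 3
  have hnum : esym 2 c - 2 * esym 3 c ≥ 0 := by linarith
  have hden : 1 - 2 * esym 2 c + 3 * esym 3 c > 0 := by linarith
  exact ⟨hnum, hden, div_nonneg hnum hden.le⟩

theorem r_nonneg (b : ℕ) (hb : 1 ≤ b) (c : Fin b → ℝ)
    (hc : ∀ j, 0 ≤ c j) (hcs : ∑ j, c j = 1) :
    esym 2 c - 2 * esym 3 c ≥ 0 ∧ 1 - 2 * esym 2 c + 3 * esym 3 c > 0 ∧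
      (esym 2 c - 2 * esym 3 c) / (1 - 2 * esym 2 c + 3 * esym 3 c) ≥ 0 :=
  r_nonneg_general b c hc hcs
end
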